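/- arXiv:math/0412553 — 2 statements merged into one kernel-verified Lean document; each statement's English description precedes it below -/
import Mathlib

section
/- Let X be a topological space in which every Λ-set is a G_δ-set, and suppose that for each pair of disjoint F_σ-sets F₀, F₁ there exist disjoint G_δ-sets G₀ ⊇ F₀ and G₁ ⊇ F₁. If f is lower semi-Baire-one, g is upper semi-Baire-one, and f ≤ g, then there exists a Baire-one function h on X with f ≤ h ≤ g. -/
open Set

variable {X : Type*} [TopologicalSpace X]

/-- The kernel `A^Λ`: intersection of all open sets containing `A`. -/
def kernelSet (A : Set X) : Set X := ⋂₀ {O | IsOpen O ∧ A ⊆ O}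

/-- The V-hull `A^V`: union of all closed sets contained in `A`. -/
def vHull (A : Set X) : Set X := ⋃₀ {F | IsClosed F ∧ F ⊆ A}

/-- An F_σ set: a countable union of closed sets. -/
def IsFsigma (A : Set X) : Prop :=
  ∃ S : Set (Set X), S.Countable ∧ (∀ F ∈ S, IsClosed F) ∧ A = ⋃₀ S

lemma isFsigma_compl_iff {A : Set X} : IsFsigma Aᶜ ↔ IsGδ A := by
  constructor
  · rintro ⟨S, hc, hcl, hA⟩
    refine ⟨compl '' S, ?_, hc.image _, ?_⟩
    · rintro t ⟨F, hF, rfl⟩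
      exact (hcl F hF).isOpen_compl
    · rw [← compl_sUnion, ← hA, compl_compl]
  · rintro ⟨T, ho, hc, hA⟩
    refine ⟨compl '' T, hc.image _, ?_, ?_⟩
    · rintro F ⟨O, hO, rfl⟩
      exact (ho O hO).isClosed_compl
    · rw [hA, compl_sInter]

lemma IsFsigma.isGδ_compl {A : Set X} (h : IsFsigma A) : IsGδ Aᶜ :=
  isFsigma_compl_iff.mp (by rwa [compl_compl])

lemma IsGδ.isFsigma_compl {A : Set X} (h : IsGδ A) : IsFsigma Aᶜ :=
  isFsigma_compl_iff.mpr h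

lemma isFsigma_iff_isGδ_compl {A : Set X} : IsFsigma A ↔ IsGδ Aᶜ :=
  ⟨IsFsigma.isGδ_compl, fun h => by simpa using h.isFsigma_compl⟩

lemma isFsigma_empty : IsFsigma (∅ : Set X) :=
  ⟨∅, countable_empty, by simp, by simp⟩

lemma IsClosed.isFsigma {A : Set X} (h : IsClosed A) : IsFsigma A :=
  ⟨{A}, countable_singleton _, by simpa using h, by simp⟩

lemma isFsigma_iUnion {ι : Sort*} [Countable ι] {A : ι → Set X}
    (h : ∀ i, IsFsigma (A i)) : IsFsigma (⋃ i, A i) := by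
  rw [isFsigma_iff_isGδ_compl, compl_iUnion]
  exact IsGδ.iInter fun i => (h i).isGδ_compl

lemma IsFsigma.union {A B : Set X} (hA : IsFsigma A) (hB : IsFsigma B) :
    IsFsigma (A ∪ B) := by
  rw [isFsigma_iff_isGδ_compl, compl_union]
  exact hA.isGδ_compl.inter hB.isGδ_compl

lemma IsFsigma.inter {A B : Set X} (hA : IsFsigma A) (hB : IsFsigma B) :
    IsFsigma (A ∩ B) := by
  rw [isFsigma_iff_isGδ_compl, compl_inter]
  exact hA.isGδ_compl.union hB.isGδ_compl

lemma keyChoice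
    (hsep : ∀ F₀ F₁ : Set X, IsFsigma F₀ → IsFsigma F₁ → Disjoint F₀ F₁ →
      ∃ G₀ G₁ : Set X, IsGδ G₀ ∧ IsGδ G₁ ∧ F₀ ⊆ G₀ ∧ F₁ ⊆ G₁ ∧ Disjoint G₀ G₁)
    (E W : Set X) :
    ∃ p : Set X × Set X, IsGδ p.1 ∧ IsFsigma p.2 ∧ p.1 ⊆ p.2 ∧ p.2 ⊆ W ∧
      (IsFsigma E → IsGδ W → E ⊆ W → E ⊆ p.1) := by
  by_cases h : IsFsigma E ∧ IsGδ W ∧ E ⊆ W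
  · obtain ⟨hE, hW, hEW⟩ := h
    obtain ⟨G₀, G₁, hG₀, hG₁, hEG₀, hWc, hdisj⟩ :=
      hsep E Wᶜ hE hW.isFsigma_compl ((disjoint_compl_right (a := W)).mono_left hEW)
    exact ⟨(G₀, G₁ᶜ), hG₀, hG₁.isFsigma_compl, hdisj.subset_compl_right,
      compl_subset_comm.mp hWc, fun _ _ _ => hEG₀⟩
  · exact ⟨(∅, ∅), IsGδ.empty, isFsigma_empty, Subset.rfl, empty_subset _,
      fun h1 h2 h3 => absurd ⟨h1, h2, h3⟩ h⟩
noncomputable def fam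
    (hsep : ∀ F₀ F₁ : Set X, IsFsigma F₀ → IsFsigma F₁ → Disjoint F₀ F₁ →
      ∃ G₀ G₁ : Set X, IsGδ G₀ ∧ IsGδ G₁ ∧ F₀ ⊆ G₀ ∧ F₁ ⊆ G₁ ∧ Disjoint G₀ G₁)
    (f g : X → ℝ) (e : ℕ → ℚ) : ℕ → Set X × Set X
  | n =>
    Classical.choose (keyChoice hsep
      ((⋃ k : Fin n, ⋃ _ : e n < e k.1, (fam hsep f g e k.1).2) ∪ f ⁻¹' Ioi (e n : ℝ))
      ((⋂ k : Fin n, ⋂ _ : e k.1 < e n, (fam hsep f g e k.1).1) ∩ (g ⁻¹' Iio (e n : ℝ))ᶜ))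
  termination_by n => n
  decreasing_by all_goals exact k.2

noncomputable def famE
    (hsep : ∀ F₀ F₁ : Set X, IsFsigma F₀ → IsFsigma F₁ → Disjoint F₀ F₁ →
      ∃ G₀ G₁ : Set X, IsGδ G₀ ∧ IsGδ G₁ ∧ F₀ ⊆ G₀ ∧ F₁ ⊆ G₁ ∧ Disjoint G₀ G₁)
    (f g : X → ℝ) (e : ℕ → ℚ) (n : ℕ) : Set X :=
  (⋃ k : Fin n, ⋃ _ : e n < e k.1, (fam hsep f g e k.1).2) ∪ f ⁻¹' Ioi (e n : ℝ)

noncomputable def famW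
    (hsep : ∀ F₀ F₁ : Set X, IsFsigma F₀ → IsFsigma F₁ → Disjoint F₀ F₁ →
      ∃ G₀ G₁ : Set X, IsGδ G₀ ∧ IsGδ G₁ ∧ F₀ ⊆ G₀ ∧ F₁ ⊆ G₁ ∧ Disjoint G₀ G₁)
    (f g : X → ℝ) (e : ℕ → ℚ) (n : ℕ) : Set X :=
  (⋂ k : Fin n, ⋂ _ : e k.1 < e n, (fam hsep f g e k.1).1) ∩ (g ⁻¹' Iio (e n : ℝ))ᶜ

lemma fam_spec
    (hsep : ∀ F₀ F₁ : Set X, IsFsigma F₀ → IsFsigma F₁ → Disjoint F₀ F₁ →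
      ∃ G₀ G₁ : Set X, IsGδ G₀ ∧ IsGδ G₁ ∧ F₀ ⊆ G₀ ∧ F₁ ⊆ G₁ ∧ Disjoint G₀ G₁)
    (f g : X → ℝ) (e : ℕ → ℚ) (n : ℕ) :
    IsGδ (fam hsep f g e n).1 ∧ IsFsigma (fam hsep f g e n).2 ∧
      (fam hsep f g e n).1 ⊆ (fam hsep f g e n).2 ∧
      (fam hsep f g e n).2 ⊆ famW hsep f g e n ∧
      (IsFsigma (famE hsep f g e n) → IsGδ (famW hsep f g e n) →
        famE hsep f g e n ⊆ famW hsep f g e n → famE hsep f g e n ⊆ (fam hsep f g e n).1) := by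
  have h : fam hsep f g e n =
      Classical.choose (keyChoice hsep (famE hsep f g e n) (famW hsep f g e n)) := by
    rw [fam]
    rfl
  rw [h]
  exact Classical.choose_spec (keyChoice hsep (famE hsep f g e n) (famW hsep f g e n))
section
variable (hsep : ∀ F₀ F₁ : Set X, IsFsigma F₀ → IsFsigma F₁ → Disjoint F₀ F₁ →
      ∃ G₀ G₁ : Set X, IsGδ G₀ ∧ IsGδ G₁ ∧ F₀ ⊆ G₀ ∧ F₁ ⊆ G₁ ∧ Disjoint G₀ G₁)
  (f g : X → ℝ) (e : ℕ → ℚ)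




lemma famE_isFsigma (hf : ∀ t : ℝ, IsFsigma (f ⁻¹' Ioi t)) (n : ℕ) : IsFsigma (famE hsep f g e n) := by
  unfold famE
  exact (isFsigma_iUnion fun (k : Fin n) => isFsigma_iUnion fun _ =>
    (fam_spec hsep f g e k.1).2.1).union (hf _)

lemma famW_isGδ (hg : ∀ t : ℝ, IsFsigma (g ⁻¹' Iio t)) (n : ℕ) : IsGδ (famW hsep f g e n) := by
  unfold famW
  exact (IsGδ.iInter fun (k : Fin n) => IsGδ.iInter fun _ => (fam_spec hsep f g e k.1).1).inter
    (hg (e n : ℝ)).isGδ_compl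

lemma fam_key (hf : ∀ t : ℝ, IsFsigma (f ⁻¹' Ioi t)) (hg : ∀ t : ℝ, IsFsigma (g ⁻¹' Iio t)) (hfg : f ≤ g) : ∀ n, famE hsep f g e n ⊆ (fam hsep f g e n).1 := by
  intro n
  induction n using Nat.strong_induction_on with
  | _ n ih =>
    refine (fam_spec hsep f g e n).2.2.2.2 (famE_isFsigma hsep f g e hf n)
      (famW_isGδ hsep f g e hg n) ?_
    intro x hx
    refine ⟨mem_iInter.mpr fun k => mem_iInter.mpr fun hk => ?_, ?_⟩
    · rcases hx with hx | hx
      · obtain ⟨j, hj⟩ := mem_iUnion.mp hx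
        obtain ⟨hje, hxj⟩ := mem_iUnion.mp hj
        rcases lt_trichotomy j.1 k.1 with hlt | heq | hgt
        · have hmem : x ∈ famE hsep f g e k.1 :=
            Or.inl (mem_iUnion.mpr ⟨⟨j.1, hlt⟩, mem_iUnion.mpr ⟨hk.trans hje, hxj⟩⟩)
          exact ih k.1 k.2 hmem
        · exact absurd (hk.trans hje) (by rw [heq]; exact lt_irrefl _)
        · have h1 := ((fam_spec hsep f g e j.1).2.2.2.1 hxj).1
          exact mem_iInter.mp (mem_iInter.mp h1 ⟨k.1, hgt⟩) (hk.trans hje)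
      · have hmem : x ∈ famE hsep f g e k.1 :=
          Or.inr (show (e k.1 : ℝ) < f x from lt_trans (by exact_mod_cast hk) hx)
        exact ih k.1 k.2 hmem
    · simp only [mem_compl_iff, mem_preimage, mem_Iio, not_lt]
      rcases hx with hx | hx
      · obtain ⟨j, hj⟩ := mem_iUnion.mp hx
        obtain ⟨hje, hxj⟩ := mem_iUnion.mp hj
        have h1 := ((fam_spec hsep f g e j.1).2.2.2.1 hxj).2
        simp only [mem_compl_iff, mem_preimage, mem_Iio, not_lt] at h1
        exact le_trans (by exact_mod_cast le_of_lt hje) h1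
      · exact le_trans (le_of_lt hx) (hfg x)

lemma fam_f_sub (hf : ∀ t : ℝ, IsFsigma (f ⁻¹' Ioi t)) (hg : ∀ t : ℝ, IsFsigma (g ⁻¹' Iio t)) (hfg : f ≤ g) (n : ℕ) : f ⁻¹' Ioi (e n : ℝ) ⊆ (fam hsep f g e n).1 :=
  fun _ hx => fam_key hsep f g e hf hg hfg n (Or.inr hx)

lemma fam_g_sub (n : ℕ) : (fam hsep f g e n).2 ⊆ (g ⁻¹' Iio (e n : ℝ))ᶜ :=
  fun _ hx => ((fam_spec hsep f g e n).2.2.2.1 hx).2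

lemma fam_mono (hf : ∀ t : ℝ, IsFsigma (f ⁻¹' Ioi t)) (hg : ∀ t : ℝ, IsFsigma (g ⁻¹' Iio t)) (hfg : f ≤ g) {m n : ℕ} (h : e m < e n) : (fam hsep f g e n).2 ⊆ (fam hsep f g e m).1 := by
  rcases lt_trichotomy m n with hmn | rfl | hnm
  · intro x hx
    have h1 := ((fam_spec hsep f g e n).2.2.2.1 hx).1
    exact mem_iInter.mp (mem_iInter.mp h1 ⟨m, hmn⟩) h
  · exact absurd h (lt_irrefl _)
  · intro x hx
    exact fam_key hsep f g e hf hg hfg m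
      (Or.inl (mem_iUnion.mpr ⟨⟨n, hnm⟩, mem_iUnion.mpr ⟨h, hx⟩⟩))

end

lemma exists_scale
    (hsep : ∀ F₀ F₁ : Set X, IsFsigma F₀ → IsFsigma F₁ → Disjoint F₀ F₁ →
      ∃ G₀ G₁ : Set X, IsGδ G₀ ∧ IsGδ G₁ ∧ F₀ ⊆ G₀ ∧ F₁ ⊆ G₁ ∧ Disjoint G₀ G₁)
    (f g : X → ℝ)
    (hf : ∀ t : ℝ, IsFsigma (f ⁻¹' Ioi t)) (hg : ∀ t : ℝ, IsFsigma (g ⁻¹' Iio t))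
    (hfg : f ≤ g) :
    ∃ A B : ℚ → Set X, (∀ q : ℚ, IsFsigma (A q)) ∧ (∀ q : ℚ, IsGδ (B q)) ∧
      (∀ q : ℚ, B q ⊆ A q) ∧ (∀ q : ℚ, f ⁻¹' Ioi (q : ℝ) ⊆ B q) ∧
      (∀ q : ℚ, A q ⊆ (g ⁻¹' Iio (q : ℝ))ᶜ) ∧ (∀ q r : ℚ, q < r → A r ⊆ B q) := by
  obtain ⟨ε⟩ : Nonempty (ℚ ≃ ℕ) := ⟨Denumerable.eqv ℚ⟩
  set e : ℕ → ℚ := fun n => ε.symm n with hedef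
  have he : ∀ q, e (ε q) = q := fun q => ε.symm_apply_apply q
  refine ⟨fun q => (fam hsep f g e (ε q)).2, fun q => (fam hsep f g e (ε q)).1,
    fun q => (fam_spec hsep f g e (ε q)).2.1,
    fun q => (fam_spec hsep f g e (ε q)).1,
    fun q => (fam_spec hsep f g e (ε q)).2.2.1,
    fun q => by simpa [he q] using fam_f_sub hsep f g e hf hg hfg (ε q),
    fun q => by simpa [he q] using fam_g_sub hsep f g e (ε q),
    fun q r hqr => fam_mono hsep f g e hf hg hfg (by rw [he q, he r]; exact hqr)⟩

theorem insertion_baireOne_of_Fsigma_separation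
    (hΛ : ∀ A : Set X, A = kernelSet A → IsGδ A)
    (hsep : ∀ F₀ F₁ : Set X, IsFsigma F₀ → IsFsigma F₁ → Disjoint F₀ F₁ →
      ∃ G₀ G₁ : Set X, IsGδ G₀ ∧ IsGδ G₁ ∧ F₀ ⊆ G₀ ∧ F₁ ⊆ G₁ ∧ Disjoint G₀ G₁)
    (f g : X → ℝ)
    (hf : ∀ t : ℝ, IsFsigma (f ⁻¹' Set.Ioi t))
    (hg : ∀ t : ℝ, IsFsigma (g ⁻¹' Set.Iio t))
    (hfg : f ≤ g) :
    ∃ h : X → ℝ, (∀ U : Set ℝ, IsOpen U → IsFsigma (h ⁻¹' U)) ∧ f ≤ h ∧ h ≤ g := by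
  obtain ⟨A, B, hAF, hBG, hBA, hfB, hAg, hmono⟩ := exists_scale hsep f g hf hg hfg
  set S : X → Set ℝ := fun x => (fun q : ℚ => (q : ℝ)) '' {q | x ∈ A q} with hS
  have hne : ∀ x, (S x).Nonempty := by
    intro x
    obtain ⟨q, hq⟩ := exists_rat_lt (f x)
    exact ⟨(q : ℝ), ⟨q, hBA q (hfB q hq), rfl⟩⟩
  have hub : ∀ x, g x ∈ upperBounds (S x) := by
    rintro x t ⟨q, hq, rfl⟩
    have h1 := hAg q hq
    simp only [mem_compl_iff, mem_preimage, mem_Iio, not_lt] at h1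
    exact h1
  have hbdd : ∀ x, BddAbove (S x) := fun x => ⟨g x, hub x⟩
  set h : X → ℝ := fun x => sSup (S x) with hh
  have hmemle : ∀ (x) (q : ℚ), x ∈ A q → (q : ℝ) ≤ h x := fun x q hq =>
    le_csSup (hbdd x) ⟨q, hq, rfl⟩
  have hgt : ∀ (x) (t : ℝ), t < h x ↔ ∃ q : ℚ, t < (q : ℝ) ∧ x ∈ A q := by
    intro x t
    constructor
    · intro ht
      obtain ⟨s, hs, hts⟩ := exists_lt_of_lt_csSup (hne x) ht
      obtain ⟨q, hq, rfl⟩ := hs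
      exact ⟨q, hts, hq⟩
    · rintro ⟨q, h1, h2⟩
      exact lt_of_lt_of_le h1 (hmemle x q h2)
  have hlt : ∀ (x) (t : ℝ), h x < t ↔ ∃ q : ℚ, (q : ℝ) < t ∧ x ∉ B q := by
    intro x t
    constructor
    · intro ht
      obtain ⟨q, h1, h2⟩ := exists_rat_btwn ht
      exact ⟨q, h2, fun hxB => absurd (hmemle x q (hBA q hxB)) (not_le.mpr h1)⟩
    · rintro ⟨q, h1, h2⟩
      refine lt_of_le_of_lt (csSup_le (hne x) ?_) h1
      rintro t' ⟨r, hr, rfl⟩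
      by_contra hc
      push_neg at hc
      exact h2 (hmono q r (by exact_mod_cast hc) hr)
  have hIoi : ∀ t : ℝ, IsFsigma (h ⁻¹' Ioi t) := by
    intro t
    have : h ⁻¹' Ioi t = ⋃ q : ℚ, ⋃ _ : t < (q : ℝ), A q := by
      ext x
      simp only [mem_preimage, mem_Ioi, mem_iUnion]
      rw [hgt x t]
      tauto
    rw [this]
    exact isFsigma_iUnion fun q => isFsigma_iUnion fun _ => hAF q
  have hIio : ∀ t : ℝ, IsFsigma (h ⁻¹' Iio t) := by
    intro t
    have : h ⁻¹' Iio t = ⋃ q : ℚ, ⋃ _ : (q : ℝ) < t, (B q)ᶜ := by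
      ext x
      simp only [mem_preimage, mem_Iio, mem_iUnion, mem_compl_iff]
      rw [hlt x t]
      tauto
    rw [this]
    exact isFsigma_iUnion fun q => isFsigma_iUnion fun _ => (hBG q).isFsigma_compl
  refine ⟨h, ?_, ?_, fun x => csSup_le (hne x) (hub x)⟩
  · intro U hU
    have hrepr : h ⁻¹' U =
        ⋃ p : ℚ × ℚ, ⋃ _ : Ioo (p.1 : ℝ) (p.2 : ℝ) ⊆ U, h ⁻¹' Ioo (p.1 : ℝ) (p.2 : ℝ) := by
      ext x
      simp only [mem_preimage, mem_iUnion]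
      constructor
      · intro hx
        obtain ⟨ε, hε, hball⟩ := Metric.isOpen_iff.mp hU (h x) hx
        obtain ⟨a, ha1, ha2⟩ := exists_rat_btwn (show h x - ε < h x by linarith)
        obtain ⟨b, hb1, hb2⟩ := exists_rat_btwn (show h x < h x + ε by linarith)
        refine ⟨(a, b), fun y hy => hball ?_, ha2, hb1⟩
        rw [Real.ball_eq_Ioo]
        exact ⟨by linarith [hy.1], by linarith [hy.2]⟩
      · rintro ⟨p, hsub, hx⟩
        exact hsub hx
    rw [hrepr]
    refine isFsigma_iUnion fun p => isFsigma_iUnion fun _ => ?_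
    rw [← Ioi_inter_Iio, preimage_inter]
    exact (hIoi _).inter (hIio _)
  · intro x
    by_contra hc
    push_neg at hc
    obtain ⟨q, hq1, hq2⟩ := exists_rat_btwn hc
    exact absurd (hmemle x q (hBA q (hfB q hq2))) (not_le.mpr hq1)
end

section
/- Let X be a normal topological space. Define a binary relation ρ on the power set of X by A ρ B iff there exists a closed set F with A^Λ ⊆ F ⊆ F^Λ ⊆ B^V. Then ρ satisfies the interpolation property: whenever Aᵢ ρ Bⱼ for i ∈ {1,…,m}, j ∈ {1,…,n}, there exists a set C with Aᵢ ρ C and C ρ Bⱼ for all i, j. -/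
open Set

variable {X : Type*} [TopologicalSpace X]

/-- The relation `A ρ B` iff there is a closed set `F` with `A^Λ ⊆ F ⊆ F^Λ ⊆ B^V`. -/
def rhoNormal (A B : Set X) : Prop :=
  ∃ F : Set X, IsClosed F ∧ kernelSet A ⊆ F ∧ F ⊆ kernelSet F ∧ kernelSet F ⊆ vHull B

/-!
Given closed witnesses `F i j` for `A i ρ B j`, the closed set `D = ⋃ i, ⋂ j, F i j` lies
between every `(A i)^Λ` and every `(F i j)^Λ`, since the kernel commutes with unions.
The interpolant is `C = closure D^Λ`: it contains `D^Λ`, and in a normal space the kernel of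
`C` is no larger than `D^Λ`, because every open neighbourhood of the closed set `D` contains
the closure of a smaller one.
-/

theorem kernelSet_eq_nhdsKer (A : Set X) : kernelSet A = nhdsKer A :=
  (nhdsKer_def A).symm

theorem IsClosed.subset_vHull {C : Set X} (hC : IsClosed C) : C ⊆ vHull C :=
  subset_sUnion_of_mem ⟨hC, subset_rfl⟩

theorem rhoNormal_iff {A B : Set X} :
    rhoNormal A B ↔ ∃ F, IsClosed F ∧ nhdsKer A ⊆ F ∧ nhdsKer F ⊆ vHull B := by
  simp only [rhoNormal, kernelSet_eq_nhdsKer]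
  exact exists_congr fun F ↦ and_congr_right' <| and_congr_right' <| and_iff_right subset_nhdsKer

theorem IsClosed.nhdsKer_closure_nhdsKer [NormalSpace X] {D : Set X} (hD : IsClosed D) :
    nhdsKer (closure (nhdsKer D)) = nhdsKer D := by
  refine Subset.antisymm (subset_nhdsKer_iff.2 fun U hU hDU ↦ ?_)
    (subset_closure.trans subset_nhdsKer)
  obtain ⟨V, hV, hDV, hVU⟩ := normal_exists_closure_subset hD hU hDU
  exact nhdsKer_minimal ((closure_mono (nhdsKer_minimal hDV hV)).trans hVU) hU

theorem interpolation_normal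
    [NormalSpace X]
    (m n : ℕ) (A : Fin m → Set X) (B : Fin n → Set X)
    (h : ∀ i j, rhoNormal (A i) (B j)) :
    ∃ C : Set X, (∀ i, rhoNormal (A i) C) ∧ (∀ j, rhoNormal C (B j)) := by
  simp only [rhoNormal_iff] at h ⊢
  choose F hF hAF hFB using h
  set D := ⋃ i, ⋂ j, F i j
  have hD : IsClosed D := isClosed_iUnion_of_finite fun i ↦ isClosed_iInter (hF i)
  set C := closure (nhdsKer D)
  have hkC : nhdsKer C = nhdsKer D := hD.nhdsKer_closure_nhdsKer
  refine ⟨C, fun i ↦ ⟨D, hD, ?_, ?_⟩, fun j ↦ ⟨C, isClosed_closure, ?_, ?_⟩⟩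
  · exact (subset_iInter (hAF i)).trans (subset_iUnion (fun i ↦ ⋂ j, F i j) i)
  · exact subset_closure.trans isClosed_closure.subset_vHull
  · exact hkC.trans_subset subset_closure
  · rw [hkC, nhdsKer_iUnion]
    exact iUnion_subset fun i ↦ (nhdsKer_mono (iInter_subset _ j)).trans (hFB i j)
end
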